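/- arXiv:0811.3011 — 2 statements merged into one kernel-verified Lean document; each statement's English description precedes it below -/
import Mathlib

section
/- Let n ≥ 1 and let f, g : ℝⁿ → ℂ be measurable. Then ∫_{ℝⁿ} |f(x)|·|g(x)| dx ≤ ( sup_{R>0} (1/R) ∫_{|x|≤R} |g|² dx )^{1/2} · Σ_{j∈ℤ} ( 2^{j+1} ∫_{C(j)} |f|² dx )^{1/2}, i.e. ∫ |f g| dx ≤ |||g||| · N(f). -/
open MeasureTheory Metric Real Set
open scoped ENNReal

noncomputable section

abbrev Euc (n : ℕ) := EuclideanSpace ℝ (Fin n)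

/-- Dyadic shell `C(j) = {2^j ≤ |x| ≤ 2^{j+1}}`. -/
def shell (n : ℕ) (j : ℤ) : Set (Euc n) := {x | (2 : ℝ) ^ j ≤ ‖x‖ ∧ ‖x‖ ≤ (2 : ℝ) ^ (j + 1)}

/-- `N(f) = Σ_{j∈ℤ} (2^{j+1} ∫_{C(j)} |f|²)^{1/2}` (with values in `ℝ≥0∞`). -/
def NnormE {n : ℕ} (f : Euc n → ℂ) : ℝ≥0∞ :=
  ∑' j : ℤ, (ENNReal.ofReal ((2 : ℝ) ^ (j + 1)) *
      ∫⁻ x in shell n j, (‖f x‖₊ : ℝ≥0∞) ^ 2) ^ (1/2 : ℝ)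

/-- Squared Morrey–Campanato norm `|||g|||² = sup_{R>0} (1/R)∫_{|x|≤R}|g|²`
(with values in `ℝ≥0∞`). -/
def morreySq {n : ℕ} (g : Euc n → ℂ) : ℝ≥0∞ :=
  ⨆ (R : ℝ) (_ : 0 < R),
    (ENNReal.ofReal R)⁻¹ * ∫⁻ x in Metric.closedBall (0 : Euc n) R, (‖g x‖₊ : ℝ≥0∞) ^ 2

/-- Surface integral over the sphere `{|x| = R}`: via polar coordinates,
`∫_{|x|=R} g dσ = R^{n-1} ∫_{ω ∈ S^{n-1}} g(Rω) dσ₁(ω)` where `σ₁ = volume.toSphere`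
is the surface measure of the unit sphere. -/
def sphereLIntegral (n : ℕ) (R : ℝ) (g : Euc n → ℝ≥0∞) : ℝ≥0∞ :=
  ENNReal.ofReal (R ^ (n - 1)) * ∫⁻ ω : Metric.sphere (0 : Euc n) 1, g (R • (ω : Euc n))
    ∂((volume : Measure (Euc n)).toSphere)

/-- `sup_{R>0} (1/R²) ∫_{|x|=R} |u|² dσ` (with values in `ℝ≥0∞`). -/
def sphereSup {n : ℕ} (u : Euc n → ℂ) : ℝ≥0∞ :=
  ⨆ (R : ℝ) (_ : 0 < R),
    (ENNReal.ofReal (R ^ 2))⁻¹ * sphereLIntegral n R (fun x => (‖u x‖₊ : ℝ≥0∞) ^ 2)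

/-! The shells `C(j)` cover `ℝⁿ ∖ {0}`, a set of full measure. On `C(j) ⊆ {|x| ≤ 2^{j+1}}`,
Cauchy–Schwarz and the definition of `|||g|||` give
`∫_{C(j)} |f g| ≤ |||g||| (2^{j+1} ∫_{C(j)} |f|²)^{1/2}`; sum over `j`. -/

theorem ENNReal.lintegral_mul_le_L2_mul_L2 {α : Type*} [MeasurableSpace α] (μ : Measure α)
    {F G : α → ℝ≥0∞} (hF : AEMeasurable F μ) (hG : AEMeasurable G μ) :
    ∫⁻ x, F x * G x ∂μ ≤ (∫⁻ x, F x ^ 2 ∂μ) ^ (1/2 : ℝ) * (∫⁻ x, G x ^ 2 ∂μ) ^ (1/2 : ℝ) := by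
  simpa only [ENNReal.rpow_two, Pi.mul_apply] using
    ENNReal.lintegral_mul_le_Lp_mul_Lq μ Real.HolderConjugate.two_two hF hG

theorem compl_singleton_zero_subset_iUnion_shell (n : ℕ) :
    ({0}ᶜ : Set (Euc n)) ⊆ ⋃ j : ℤ, shell n j := by
  intro x hx
  have hx0 : 0 < ‖x‖ := norm_pos_iff.2 hx
  exact mem_iUnion.2 ⟨Int.log 2 ‖x‖, Int.zpow_log_le_self (by norm_num) hx0,
    (Int.lt_zpow_succ_log_self (by norm_num) ‖x‖).le⟩

theorem shell_subset_closedBall (n : ℕ) (j : ℤ) :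
    shell n j ⊆ closedBall (0 : Euc n) ((2 : ℝ) ^ (j + 1)) := fun x hx => by
  simpa using hx.2

theorem lintegral_le_tsum_setLIntegral_shell {n : ℕ} (hn : 1 ≤ n) (F : Euc n → ℝ≥0∞) :
    ∫⁻ x, F x ≤ ∑' j : ℤ, ∫⁻ x in shell n j, F x := by
  have : Nonempty (Fin n) := ⟨⟨0, hn⟩⟩
  calc ∫⁻ x, F x = ∫⁻ x in ({0}ᶜ : Set (Euc n)), F x := by rw [restrict_compl_singleton]
    _ ≤ ∫⁻ x in ⋃ j : ℤ, shell n j, F x :=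
        lintegral_mono_set (compl_singleton_zero_subset_iUnion_shell n)
    _ ≤ ∑' j : ℤ, ∫⁻ x in shell n j, F x := lintegral_iUnion_le _ _

theorem setLIntegral_closedBall_le_morreySq {n : ℕ} (g : Euc n → ℂ) {R : ℝ} (hR : 0 < R) :
    ∫⁻ x in closedBall (0 : Euc n) R, (‖g x‖₊ : ℝ≥0∞) ^ 2 ≤ ENNReal.ofReal R * morreySq g := by
  have hR' : ENNReal.ofReal R ≠ 0 := ENNReal.ofReal_ne_zero_iff.2 hR
  rw [← ENNReal.inv_mul_le_iff hR' ENNReal.ofReal_ne_top, morreySq]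
  exact le_iSup₂ (f := fun (R : ℝ) (_ : 0 < R) => (ENNReal.ofReal R)⁻¹ *
    ∫⁻ x in closedBall (0 : Euc n) R, (‖g x‖₊ : ℝ≥0∞) ^ 2) R hR

theorem setLIntegral_mul_le_morreySq_mul {n : ℕ} {f g : Euc n → ℂ} (hf : Measurable f)
    (hg : Measurable g) {s : Set (Euc n)} {R : ℝ} (hR : 0 < R) (hs : s ⊆ closedBall 0 R) :
    ∫⁻ x in s, (‖f x‖₊ : ℝ≥0∞) * (‖g x‖₊ : ℝ≥0∞)
      ≤ morreySq g ^ (1/2 : ℝ) *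
        (ENNReal.ofReal R * ∫⁻ x in s, (‖f x‖₊ : ℝ≥0∞) ^ 2) ^ (1/2 : ℝ) := by
  have hg_sq : ∫⁻ x in s, (‖g x‖₊ : ℝ≥0∞) ^ 2 ≤ ENNReal.ofReal R * morreySq g :=
    (lintegral_mono_set hs).trans (setLIntegral_closedBall_le_morreySq g hR)
  calc ∫⁻ x in s, (‖f x‖₊ : ℝ≥0∞) * (‖g x‖₊ : ℝ≥0∞)
      ≤ (∫⁻ x in s, (‖f x‖₊ : ℝ≥0∞) ^ 2) ^ (1/2 : ℝ) *
          (∫⁻ x in s, (‖g x‖₊ : ℝ≥0∞) ^ 2) ^ (1/2 : ℝ) :=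
        ENNReal.lintegral_mul_le_L2_mul_L2 _ hf.enorm.aemeasurable hg.enorm.aemeasurable
    _ ≤ (∫⁻ x in s, (‖f x‖₊ : ℝ≥0∞) ^ 2) ^ (1/2 : ℝ) *
          (ENNReal.ofReal R * morreySq g) ^ (1/2 : ℝ) := by gcongr
    _ = morreySq g ^ (1/2 : ℝ) *
          (ENNReal.ofReal R * ∫⁻ x in s, (‖f x‖₊ : ℝ≥0∞) ^ 2) ^ (1/2 : ℝ) := by
        rw [ENNReal.mul_rpow_of_nonneg _ _ (by norm_num),
          ENNReal.mul_rpow_of_nonneg _ _ (by norm_num)]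
        ring

/-- **Duality between `N` and the Morrey–Campanato norm**:
`∫ |f g| ≤ |||g||| · N(f)`. -/
theorem morrey_duality
    (n : ℕ) (hn : 1 ≤ n) (f g : Euc n → ℂ) (hf : Measurable f) (hg : Measurable g) :
    ∫⁻ x, (‖f x‖₊ : ℝ≥0∞) * (‖g x‖₊ : ℝ≥0∞)
      ≤ (morreySq g) ^ (1/2 : ℝ) * NnormE f := by
  calc ∫⁻ x, (‖f x‖₊ : ℝ≥0∞) * (‖g x‖₊ : ℝ≥0∞)
      ≤ ∑' j : ℤ, ∫⁻ x in shell n j, (‖f x‖₊ : ℝ≥0∞) * (‖g x‖₊ : ℝ≥0∞) :=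
        lintegral_le_tsum_setLIntegral_shell hn _
    _ ≤ ∑' j : ℤ, morreySq g ^ (1/2 : ℝ) * (ENNReal.ofReal ((2 : ℝ) ^ (j + 1)) *
          ∫⁻ x in shell n j, (‖f x‖₊ : ℝ≥0∞) ^ 2) ^ (1/2 : ℝ) :=
        ENNReal.tsum_le_tsum fun j => setLIntegral_mul_le_morreySq_mul hf hg
          (zpow_pos two_pos _) (shell_subset_closedBall n j)
    _ = morreySq g ^ (1/2 : ℝ) * NnormE f := by rw [ENNReal.tsum_mul_left, NnormE]
end
end

section
/- Let n ≥ 2, let f : ℝⁿ → ℂ be measurable and let u : ℝⁿ → ℂ be continuous. Then ∫_{ℝⁿ} |f(x)|·|u(x)|/|x| dx ≤ ( sup_{R>0} (1/R²) ∫_{|x|=R} |u|² dσ )^{1/2} · N(f), where dσ is the surface measure on the sphere {|x| = R}. -/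
open MeasureTheory Metric Real Set
open scoped ENNReal

noncomputable section

/-! Split `ℝⁿ \ {0}` into the dyadic shells `C(j)`. On each shell, Cauchy–Schwarz bounds the
integral of `|f| · (|u| / |x|)` by `(∫_{C(j)} |f|²)^{1/2} (∫_{C(j)} |u|² / |x|²)^{1/2}`, and in
polar coordinates the second factor is `∫_{2^j}^{2^{j+1}} r⁻² ∫_{|x|=r} |u|² dσ dr ≤ 2^j · sup_R …`.
Summing over `j` gives `N(f)`. -/

theorem lintegral_mul_le_sqrt_mul_sqrt {α : Type*} [MeasurableSpace α] (μ : Measure α)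
    {f g : α → ℝ≥0∞} (hf : AEMeasurable f μ) (hg : AEMeasurable g μ) :
    ∫⁻ a, f a * g a ∂μ ≤ (∫⁻ a, f a ^ 2 ∂μ) ^ (1 / 2 : ℝ) * (∫⁻ a, g a ^ 2 ∂μ) ^ (1 / 2 : ℝ) := by
  simpa only [ENNReal.rpow_two, Pi.mul_apply] using
    ENNReal.lintegral_mul_le_Lp_mul_Lq μ .two_two hf hg

section PolarCoordinates

variable {E : Type*} [NormedAddCommGroup E] [NormedSpace ℝ E] [FiniteDimensional ℝ E]
  [Nontrivial E] [MeasurableSpace E] [BorelSpace E] (μ : Measure E) [μ.IsAddHaarMeasure]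

theorem lintegral_eq_lintegral_Ioi_toSphere {g : E → ℝ≥0∞} (hg : Measurable g) :
    ∫⁻ x, g x ∂μ = ∫⁻ r in Ioi (0 : ℝ), ENNReal.ofReal (r ^ (Module.finrank ℝ E - 1)) *
      ∫⁻ ω, g (r • (ω : E)) ∂μ.toSphere := by
  have hgp : Measurable fun p : sphere (0 : E) 1 × Ioi (0 : ℝ) => g ((p.2 : ℝ) • (p.1 : E)) :=
    hg.comp (by fun_prop)
  calc ∫⁻ x, g x ∂μ = ∫⁻ x : ({0}ᶜ : Set E), g x ∂(μ.comap (↑)) := by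
        rw [lintegral_subtype_comap (measurableSet_singleton 0).compl, restrict_compl_singleton]
    _ = ∫⁻ p, g ((p.2 : ℝ) • (p.1 : E))
          ∂(μ.toSphere.prod (Measure.volumeIoiPow (Module.finrank ℝ E - 1))) := by
        rw [← (μ.measurePreserving_homeomorphUnitSphereProd).lintegral_comp hgp]
        refine lintegral_congr fun x => ?_
        rw [← homeomorphUnitSphereProd_symm_apply_coe, Homeomorph.symm_apply_apply]
    _ = ∫⁻ r, ∫⁻ ω, g ((r : ℝ) • (ω : E)) ∂μ.toSphere
          ∂(Measure.volumeIoiPow (Module.finrank ℝ E - 1)) :=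
        lintegral_prod_symm _ hgp.aemeasurable
    _ = _ := by
        have hsphere : Measurable fun r : Ioi (0 : ℝ) => ∫⁻ ω, g ((r : ℝ) • (ω : E)) ∂μ.toSphere :=
          (hgp.comp measurable_swap).lintegral_prod_right'
        rw [Measure.volumeIoiPow, lintegral_withDensity_eq_lintegral_mul _ (by fun_prop) hsphere,
          ← lintegral_subtype_comap measurableSet_Ioi]
        rfl

end PolarCoordinates

section Shells

variable {n : ℕ}

lemma lintegral_eq_lintegral_sphereLIntegral (hn : 1 ≤ n) {g : Euc n → ℝ≥0∞}
    (hg : Measurable g) : ∫⁻ x, g x = ∫⁻ r in Ioi (0 : ℝ), sphereLIntegral n r g := by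
  have : Nonempty (Fin n) := ⟨⟨0, hn⟩⟩
  simpa [sphereLIntegral, finrank_euclideanSpace_fin] using
    lintegral_eq_lintegral_Ioi_toSphere volume hg

lemma sphereLIntegral_indicator_norm_preimage {r : ℝ} (hr : 0 ≤ r) (S : Set ℝ)
    (g : Euc n → ℝ≥0∞) :
    sphereLIntegral n r ((norm ⁻¹' S).indicator g) = S.indicator (sphereLIntegral n · g) r := by
  by_cases hrS : r ∈ S <;> simp [sphereLIntegral, indicator, norm_smul, abs_of_nonneg hr, hrS]

lemma sphereLIntegral_mul_norm {r : ℝ} (hr : 0 ≤ r) (g : Euc n → ℝ≥0∞) {h : ℝ → ℝ≥0∞}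
    (hh : h r ≠ ∞) :
    sphereLIntegral n r (fun x => g x * h ‖x‖) = sphereLIntegral n r g * h r := by
  simp only [sphereLIntegral, norm_smul, norm_eq_of_mem_sphere, Real.norm_eq_abs,
    abs_of_nonneg hr, mul_one]
  rw [lintegral_mul_const' _ _ hh, mul_assoc]

lemma setLIntegral_norm_preimage (hn : 1 ≤ n) {S : Set ℝ} (hS : MeasurableSet S)
    (hS0 : S ⊆ Ioi 0) {g : Euc n → ℝ≥0∞} (hg : Measurable g) :
    ∫⁻ x in norm ⁻¹' S, g x = ∫⁻ r in S, sphereLIntegral n r g := by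
  rw [← lintegral_indicator (measurable_norm hS),
    lintegral_eq_lintegral_sphereLIntegral hn (hg.indicator (measurable_norm hS)),
    setLIntegral_congr_fun measurableSet_Ioi fun r hr =>
      sphereLIntegral_indicator_norm_preimage (le_of_lt hr) S g,
    lintegral_indicator hS, Measure.restrict_restrict hS, inter_eq_left.2 hS0]

lemma le_sphereSup (u : Euc n → ℂ) {R : ℝ} (hR : 0 < R) :
    (ENNReal.ofReal (R ^ 2))⁻¹ * sphereLIntegral n R (fun x => (‖u x‖₊ : ℝ≥0∞) ^ 2)
      ≤ sphereSup u :=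
  le_iSup₂ (f := fun (R : ℝ) (_ : 0 < R) =>
    (ENNReal.ofReal (R ^ 2))⁻¹ * sphereLIntegral n R (fun x => (‖u x‖₊ : ℝ≥0∞) ^ 2)) R hR

lemma setLIntegral_shell_div_norm_sq_le (hn : 1 ≤ n) {u : Euc n → ℂ} (hu : Measurable u)
    (j : ℤ) :
    ∫⁻ x in shell n j, ((‖u x‖₊ : ℝ≥0∞) * (ENNReal.ofReal ‖x‖)⁻¹) ^ 2
      ≤ ENNReal.ofReal ((2 : ℝ) ^ j) * sphereSup u := by
  have hIcc : Icc ((2 : ℝ) ^ j) ((2 : ℝ) ^ (j + 1)) ⊆ Ioi 0 := fun r hr =>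
    (zpow_pos two_pos j).trans_le hr.1
  have hsq : ∀ x : Euc n, ((‖u x‖₊ : ℝ≥0∞) * (ENNReal.ofReal ‖x‖)⁻¹) ^ 2
      = (‖u x‖₊ : ℝ≥0∞) ^ 2 * (ENNReal.ofReal (‖x‖ ^ 2))⁻¹ := fun x => by
    rw [mul_pow, ← ENNReal.inv_pow, ENNReal.ofReal_pow (norm_nonneg x)]
  calc ∫⁻ x in shell n j, ((‖u x‖₊ : ℝ≥0∞) * (ENNReal.ofReal ‖x‖)⁻¹) ^ 2
      = ∫⁻ r in Icc ((2 : ℝ) ^ j) ((2 : ℝ) ^ (j + 1)), sphereLIntegral n r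
          (fun x => (‖u x‖₊ : ℝ≥0∞) ^ 2 * (ENNReal.ofReal (‖x‖ ^ 2))⁻¹) := by
        simp_rw [hsq]
        exact setLIntegral_norm_preimage hn measurableSet_Icc hIcc (by fun_prop)
    _ ≤ ∫⁻ _ in Icc ((2 : ℝ) ^ j) ((2 : ℝ) ^ (j + 1)), sphereSup u := by
        refine setLIntegral_mono' measurableSet_Icc fun r hr => ?_
        have hr0 : 0 < r := hIcc hr
        rw [sphereLIntegral_mul_norm (h := fun t => (ENNReal.ofReal (t ^ 2))⁻¹) hr0.le _
          (by simpa using hr0.ne'), mul_comm]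
        exact le_sphereSup u hr0
    _ = ENNReal.ofReal ((2 : ℝ) ^ j) * sphereSup u := by
        rw [setLIntegral_const, Real.volume_Icc, zpow_add_one₀ two_ne_zero, mul_comm]
        ring_nf

lemma setLIntegral_shell_mul_div_norm_le (hn : 1 ≤ n) {f u : Euc n → ℂ} (hf : Measurable f)
    (hu : Measurable u) (j : ℤ) :
    ∫⁻ x in shell n j, (‖f x‖₊ : ℝ≥0∞) * (‖u x‖₊ : ℝ≥0∞) * (ENNReal.ofReal ‖x‖)⁻¹
      ≤ sphereSup u ^ (1 / 2 : ℝ) * (ENNReal.ofReal ((2 : ℝ) ^ (j + 1)) *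
          ∫⁻ x in shell n j, (‖f x‖₊ : ℝ≥0∞) ^ 2) ^ (1 / 2 : ℝ) := by
  set I := ∫⁻ x in shell n j, (‖f x‖₊ : ℝ≥0∞) ^ 2
  calc ∫⁻ x in shell n j, (‖f x‖₊ : ℝ≥0∞) * (‖u x‖₊ : ℝ≥0∞) * (ENNReal.ofReal ‖x‖)⁻¹
      = ∫⁻ x in shell n j, (‖f x‖₊ : ℝ≥0∞) * ((‖u x‖₊ : ℝ≥0∞) * (ENNReal.ofReal ‖x‖)⁻¹) := by
        simp_rw [mul_assoc]
    _ ≤ I ^ (1 / 2 : ℝ) *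
          (∫⁻ x in shell n j, ((‖u x‖₊ : ℝ≥0∞) * (ENNReal.ofReal ‖x‖)⁻¹) ^ 2) ^ (1 / 2 : ℝ) :=
        lintegral_mul_le_sqrt_mul_sqrt _ (by fun_prop) (by fun_prop)
    _ ≤ I ^ (1 / 2 : ℝ) * (ENNReal.ofReal ((2 : ℝ) ^ (j + 1)) * sphereSup u) ^ (1 / 2 : ℝ) := by
        gcongr
        refine (setLIntegral_shell_div_norm_sq_le hn hu j).trans ?_
        gcongr
        exacts [one_le_two, by omega]
    _ = _ := by
        rw [ENNReal.mul_rpow_of_nonneg _ _ (by norm_num),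
          ENNReal.mul_rpow_of_nonneg _ _ (by norm_num)]
        ring

lemma compl_zero_subset_iUnion_shell : ({0}ᶜ : Set (Euc n)) ⊆ ⋃ j : ℤ, shell n j := by
  intro x hx
  obtain ⟨j, hj⟩ := exists_mem_Ico_zpow (norm_pos_iff.2 hx) one_lt_two
  exact mem_iUnion.2 ⟨j, hj.1, hj.2.le⟩

end Shells

/-- **Estimate underlying (3.11)**:
`∫ |f||u|/|x| dx ≤ (sup_{R>0} (1/R²)∫_{|x|=R}|u|²dσ)^{1/2} · N(f)`. -/
theorem dyadic_sphere_duality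
    (n : ℕ) (hn : 2 ≤ n) (f : Euc n → ℂ) (u : Euc n → ℂ)
    (hf : Measurable f) (hu : Continuous u) :
    ∫⁻ x, (‖f x‖₊ : ℝ≥0∞) * (‖u x‖₊ : ℝ≥0∞) * (ENNReal.ofReal ‖x‖)⁻¹
      ≤ (sphereSup u) ^ (1/2 : ℝ) * NnormE f := by
  have : Nonempty (Fin n) := ⟨⟨0, by omega⟩⟩
  calc ∫⁻ x, (‖f x‖₊ : ℝ≥0∞) * (‖u x‖₊ : ℝ≥0∞) * (ENNReal.ofReal ‖x‖)⁻¹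
      = ∫⁻ x in {0}ᶜ, (‖f x‖₊ : ℝ≥0∞) * (‖u x‖₊ : ℝ≥0∞) * (ENNReal.ofReal ‖x‖)⁻¹ := by
        rw [restrict_compl_singleton]
    _ ≤ ∑' j : ℤ, ∫⁻ x in shell n j,
          (‖f x‖₊ : ℝ≥0∞) * (‖u x‖₊ : ℝ≥0∞) * (ENNReal.ofReal ‖x‖)⁻¹ :=
        (lintegral_mono_set compl_zero_subset_iUnion_shell).trans (lintegral_iUnion_le _ _)
    _ ≤ ∑' j : ℤ, sphereSup u ^ (1 / 2 : ℝ) * (ENNReal.ofReal ((2 : ℝ) ^ (j + 1)) *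
          ∫⁻ x in shell n j, (‖f x‖₊ : ℝ≥0∞) ^ 2) ^ (1 / 2 : ℝ) :=
        ENNReal.tsum_le_tsum fun j =>
          setLIntegral_shell_mul_div_norm_le (by omega) hf hu.measurable j
    _ = sphereSup u ^ (1 / 2 : ℝ) * NnormE f := ENNReal.tsum_mul_left
end
end
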